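/- arXiv:2311.15874 — 2 statements merged into one kernel-verified Lean document; each statement's English description precedes it below -/
import Mathlib

section
/- Let 1 ≤ p < ∞ and μ, ν ∈ 𝒫_p(ℝ^n). Then the function S^{n−1} → ℝ given by ω ↦ MK_p^ℝ(R^ω_♯μ, R^ω_♯ν) is continuous. -/
open MeasureTheory ENNReal Filter
open scoped RealInnerProductSpace BoundedContinuousFunction NNReal

noncomputable section

/-- The set of couplings (transport plans) between two measures. -/
def couplings {α β : Type*} [MeasurableSpace α] [MeasurableSpace β]
    (μ : Measure α) (ν : Measure β) : Set (Measure (α × β)) :=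
  {γ | γ.map Prod.fst = μ ∧ γ.map Prod.snd = ν}

/-- The `p`-Monge–Kantorovich (Wasserstein) distance, valued in `ℝ≥0∞`. -/
def MK (p : ℝ) {α : Type*} [PseudoEMetricSpace α] [MeasurableSpace α]
    (μ ν : Measure α) : ℝ≥0∞ :=
  (⨅ γ ∈ couplings μ ν, ∫⁻ z, edist z.1 z.2 ^ p ∂γ) ^ (1 / p)

/-- The `L^q` norm (w.r.t. a measure `σ`) of an `ℝ≥0∞`-valued function. -/
def lqNorm {Ω : Type*} [MeasurableSpace Ω] (q : ℝ≥0∞) (σ : Measure Ω) (f : Ω → ℝ≥0∞) : ℝ≥0∞ :=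
  if q = ∞ then essSup f σ else (∫⁻ ω, f ω ^ q.toReal ∂σ) ^ (1 / q.toReal)

/-- The unit sphere `S^{n-1}` in `ℝ^n`. -/
abbrev unitSphere (n : ℕ) := Metric.sphere (0 : EuclideanSpace ℝ (Fin n)) 1

/-- The normalized uniform probability measure `σ_{n-1}` on the unit sphere. -/
def sphereProb (n : ℕ) : Measure (unitSphere n) :=
  ((volume : Measure (EuclideanSpace ℝ (Fin n))).toSphere Set.univ)⁻¹ •
    (volume : Measure (EuclideanSpace ℝ (Fin n))).toSphere

/-- The Radon transform `R^ω_♯ μ` of a measure: pushforward under `x ↦ ⟨x, ω⟩`. -/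
def radon {n : ℕ} (μ : Measure (EuclideanSpace ℝ (Fin n))) (ω : unitSphere n) : Measure ℝ :=
  μ.map (fun x => ⟪x, (ω : EuclideanSpace ℝ (Fin n))⟫)

/-- The sliced `(p,q)`-Monge–Kantorovich metric. -/
def MKpq (p : ℝ) (q : ℝ≥0∞) {n : ℕ} (μ ν : Measure (EuclideanSpace ℝ (Fin n))) : ℝ≥0∞ :=
  lqNorm q (sphereProb n) (fun ω => MK p (radon μ ω) (radon ν ω))

/-- Membership in `𝒫_p`: a Borel probability measure with finite `p`-th moment. -/
def MemPp (p : ℝ) {E : Type*} [NormedAddCommGroup E] [MeasurableSpace E] (μ : Measure E) : Prop :=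
  IsProbabilityMeasure μ ∧ ∫⁻ x, (‖x‖₊ : ℝ≥0∞) ^ p ∂μ ≠ ∞


section AllAux
open ProbabilityTheory

section Aux

variable {α β γ : Type*} [MeasurableSpace α] [MeasurableSpace β] [MeasurableSpace γ]

lemma myMap_bind (m : Measure α) (F : α → Measure β) (hF : Measurable F)
    {g : β → γ} (hg : Measurable g) :
    (m.bind F).map g = m.bind (fun a => (F a).map g) := by
  ext s hs
  rw [Measure.map_apply hg hs, Measure.bind_apply (hg hs) hF.aemeasurable,
    Measure.bind_apply hs (show Measurable fun a => Measure.map g (F a) from (Measure.measurable_map g hg).comp hF).aemeasurable]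
  exact lintegral_congr fun a => (Measure.map_apply hg hs).symm

lemma myBind_map (m : Measure α) {g : α → β} (hg : Measurable g) (F : β → Measure γ)
    (hF : Measurable F) :
    (m.map g).bind F = m.bind (fun a => F (g a)) := by
  ext s hs
  rw [Measure.bind_apply hs hF.aemeasurable, Measure.bind_apply hs (show Measurable fun a => F (g a) from hF.comp hg).aemeasurable,
    lintegral_map (f := fun b => F b s) ((Measure.measurable_coe hs).comp hF) hg]

lemma myBind_congr (m : Measure α) {F G : α → Measure β} (hF : Measurable F) (hG : Measurable G)
    (h : F =ᵐ[m] G) : m.bind F = m.bind G := by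
  ext s hs
  rw [Measure.bind_apply hs hF.aemeasurable, Measure.bind_apply hs hG.aemeasurable]
  exact lintegral_congr_ae (h.mono fun a ha => by simp only [ha])

lemma myCompProd_map (μ : Measure α) [SFinite μ] (κ : Kernel α β) [IsSFiniteKernel κ]
    {g : β → γ} (hg : Measurable g) :
    (μ ⊗ₘ κ).map (Prod.map id g) = μ ⊗ₘ (κ.map g) := by
  ext s hs
  rw [Measure.map_apply (measurable_id.prodMap hg) hs,
    Measure.compProd_apply ((measurable_id.prodMap hg) hs), Measure.compProd_apply hs]
  refine lintegral_congr fun a => ?_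
  rw [Kernel.map_apply' _ hg _ (measurable_prodMk_left hs)]
  rfl

lemma myCompProd_det (σ : Measure α) [SFinite σ] :
    σ ⊗ₘ (Kernel.deterministic id measurable_id) = σ.map (fun t => (t, t)) := by
  ext s hs
  have hD : MeasurableSet ((fun t : α => (t, t)) ⁻¹' s) :=
    (measurable_id.prodMk measurable_id) hs
  rw [Measure.compProd_apply hs, Measure.map_apply (f := fun t : α => (t, t)) (measurable_id.prodMk measurable_id) hs,
    ← lintegral_indicator_one hD]
  refine lintegral_congr fun a => ?_
  rw [Kernel.deterministic_apply' measurable_id _ (measurable_prodMk_left hs)]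
  by_cases h : (a, a) ∈ s <;> simp [Set.indicator_apply, h]

end Aux
section Fiber

variable {E : Type*} [MeasurableSpace E] [StandardBorelSpace E] [Nonempty E]
  (μ : Measure E) [IsProbabilityMeasure μ]

lemma fiber_fst {f : E → ℝ} (hf : Measurable f) :
    (μ.map (fun x => (f x, x))).fst = μ.map f := by
  rw [Measure.fst, Measure.map_map measurable_fst
    (show Measurable fun x : E => (f x, x) from hf.prodMk measurable_id)]
  rfl

lemma fiber_bind {f : E → ℝ} (hf : Measurable f) :
    haveI : IsProbabilityMeasure (μ.map (fun x => (f x, x))) :=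
      Measure.isProbabilityMeasure_map (hf.prodMk measurable_id).aemeasurable
    (μ.map f).bind (⇑(μ.map (fun x => (f x, x))).condKernel) = μ := by
  haveI : IsProbabilityMeasure (μ.map (fun x => (f x, x))) :=
    Measure.isProbabilityMeasure_map (hf.prodMk measurable_id).aemeasurable
  set ρ := μ.map (fun x => (f x, x)) with hρ
  haveI : IsProbabilityMeasure (μ.map f) := Measure.isProbabilityMeasure_map hf.aemeasurable
  have hd : (μ.map f) ⊗ₘ ρ.condKernel = ρ := by
    rw [← fiber_fst μ hf]; exact ρ.disintegrate ρ.condKernel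
  ext s hs
  rw [Measure.bind_apply hs (Kernel.measurable _).aemeasurable]
  have h1 : ∫⁻ t, ρ.condKernel t s ∂(μ.map f)
      = ((μ.map f) ⊗ₘ ρ.condKernel) (Set.univ ×ˢ s) := by
    rw [Measure.compProd_apply_prod MeasurableSet.univ hs, setLIntegral_univ]
  rw [h1, hd, hρ, Measure.map_apply
    (show Measurable fun x : E => (f x, x) from hf.prodMk measurable_id)
    (MeasurableSet.univ.prod hs)]
  congr 1
  ext x
  simp

lemma fiber_dirac {f : E → ℝ} (hf : Measurable f) :
    haveI : IsProbabilityMeasure (μ.map (fun x => (f x, x))) :=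
      Measure.isProbabilityMeasure_map (hf.prodMk measurable_id).aemeasurable
    ∀ᵐ t ∂(μ.map f),
      ((μ.map (fun x => (f x, x))).condKernel t).map f = Measure.dirac t := by
  haveI : IsProbabilityMeasure (μ.map (fun x => (f x, x))) :=
    Measure.isProbabilityMeasure_map (hf.prodMk measurable_id).aemeasurable
  set ρ := μ.map (fun x => (f x, x)) with hρ
  set ρ' := μ.map (fun x => (f x, f x)) with hρ'
  haveI : IsProbabilityMeasure ρ' :=
    Measure.isProbabilityMeasure_map (hf.prodMk hf).aemeasurable
  haveI : IsProbabilityMeasure (μ.map f) := Measure.isProbabilityMeasure_map hf.aemeasurable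
  have h1' : ρ'.fst = μ.map f := by
    rw [hρ', Measure.fst, Measure.map_map measurable_fst
      (show Measurable fun x : E => (f x, f x) from hf.prodMk hf)]
    rfl
  have hd : (μ.map f) ⊗ₘ ρ.condKernel = ρ := by
    rw [← fiber_fst μ hf]; exact ρ.disintegrate ρ.condKernel
  have hκf : ρ' = ρ'.fst ⊗ₘ (ρ.condKernel.map f) := by
    rw [h1', ← myCompProd_map (μ.map f) ρ.condKernel hf, hd, hρ,
      Measure.map_map (show Measurable (Prod.map (id : ℝ → ℝ) f) from
        measurable_id.prodMap hf)
      (show Measurable fun x : E => (f x, x) from hf.prodMk measurable_id)]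
    rfl
  have hdet : ρ' = ρ'.fst ⊗ₘ (Kernel.deterministic id measurable_id) := by
    rw [h1', myCompProd_det (μ.map f),
      Measure.map_map (show Measurable fun t : ℝ => (t, t) from
        measurable_id.prodMk measurable_id) hf]
    rfl
  have ha := eq_condKernel_of_measure_eq_compProd (ρ := ρ') (ρ.condKernel.map f) hκf
  have hb := eq_condKernel_of_measure_eq_compProd (ρ := ρ')
    (Kernel.deterministic id measurable_id) hdet
  rw [h1'] at ha hb
  filter_upwards [ha, hb] with t h1 h2
  rw [← Kernel.map_apply _ hf, h1, ← h2, Kernel.deterministic_apply]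
  rfl

end Fiber
section Lift

variable {E : Type*} [MeasurableSpace E] [StandardBorelSpace E] [Nonempty E]

lemma lift_coupling (μ ν : Measure E) [IsProbabilityMeasure μ] [IsProbabilityMeasure ν]
    {f : E → ℝ} (hf : Measurable f) (γ : Measure (ℝ × ℝ))
    (h1 : γ.map Prod.fst = μ.map f) (h2 : γ.map Prod.snd = ν.map f) :
    ∃ π : Measure (E × E), π.map Prod.fst = μ ∧ π.map Prod.snd = ν ∧
      π.map (Prod.map f f) = γ := by
  haveI : IsProbabilityMeasure (μ.map (fun x => (f x, x))) :=
    Measure.isProbabilityMeasure_map (hf.prodMk measurable_id).aemeasurable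
  haveI : IsProbabilityMeasure (ν.map (fun x => (f x, x))) :=
    Measure.isProbabilityMeasure_map (hf.prodMk measurable_id).aemeasurable
  haveI : IsProbabilityMeasure (μ.map f) := Measure.isProbabilityMeasure_map hf.aemeasurable
  haveI : IsProbabilityMeasure (ν.map f) := Measure.isProbabilityMeasure_map hf.aemeasurable
  haveI : IsProbabilityMeasure γ := by
    constructor
    have : γ.map Prod.fst Set.univ = 1 := by
      rw [h1]; exact measure_univ
    rwa [Measure.map_apply measurable_fst MeasurableSet.univ, Set.preimage_univ] at this
  set κμ := (μ.map (fun x => (f x, x))).condKernel with hκμ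
  set κν := (ν.map (fun x => (f x, x))).condKernel with hκν
  set K : Kernel (ℝ × ℝ) (E × E) :=
    (κμ.comap Prod.fst measurable_fst) ×ₖ (κν.comap Prod.snd measurable_snd) with hK
  have hKapp : ∀ ts : ℝ × ℝ, K ts = (κμ ts.1).prod (κν ts.2) := fun ts => by
    rw [hK, Kernel.prod_apply, Kernel.comap_apply, Kernel.comap_apply]
  refine ⟨γ.bind ⇑K, ?_, ?_, ?_⟩
  · rw [myMap_bind γ ⇑K K.measurable measurable_fst]
    have : (fun ts => (K ts).map Prod.fst) = fun ts : ℝ × ℝ => κμ ts.1 := by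
      funext ts
      rw [hKapp ts, Measure.map_fst_prod, measure_univ, one_smul]
    rw [this, ← myBind_map γ measurable_fst ⇑κμ (Kernel.measurable _), h1, fiber_bind μ hf]
  · rw [myMap_bind γ ⇑K K.measurable measurable_snd]
    have : (fun ts => (K ts).map Prod.snd) = fun ts : ℝ × ℝ => κν ts.2 := by
      funext ts
      rw [hKapp ts, Measure.map_snd_prod, measure_univ, one_smul]
    rw [this, ← myBind_map γ measurable_snd ⇑κν (Kernel.measurable _), h2, fiber_bind ν hf]
  · rw [myMap_bind γ ⇑K K.measurable (hf.prodMap hf)]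
    have hμd : ∀ᵐ ts ∂γ, (κμ ts.1).map f = Measure.dirac ts.1 := by
      have := fiber_dirac μ hf
      rw [← h1] at this
      exact ae_of_ae_map measurable_fst.aemeasurable this
    have hνd : ∀ᵐ ts ∂γ, (κν ts.2).map f = Measure.dirac ts.2 := by
      have := fiber_dirac ν hf
      rw [← h2] at this
      exact ae_of_ae_map measurable_snd.aemeasurable this
    have hmeas1 : Measurable fun ts => (K ts).map (Prod.map f f) :=
      (Measure.measurable_map _ (hf.prodMap hf)).comp K.measurable
    have heq : (fun ts => (K ts).map (Prod.map f f)) =ᵐ[γ] fun ts => Measure.dirac ts := by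
      filter_upwards [hμd, hνd] with ts hμ' hν'
      rw [hKapp ts, ← Measure.map_prod_map _ _ hf hf, hμ', hν', Measure.dirac_prod_dirac]
    rw [myBind_congr γ hmeas1 Measure.measurable_dirac heq, Measure.bind_dirac]

end Lift


lemma iInf_rpow_comm {ι : Sort*} (g : ι → ℝ≥0∞) {c : ℝ} (hc : 0 < c) :
    (⨅ i, g i) ^ c = ⨅ i, (g i) ^ c := by
  refine le_antisymm (le_iInf fun i => ENNReal.rpow_le_rpow (iInf_le g i) hc.le) ?_
  have h : (⨅ i, (g i) ^ c) ^ (1 / c) ≤ ⨅ i, g i := by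
    refine le_iInf fun i => ?_
    calc (⨅ i, (g i) ^ c) ^ (1 / c) ≤ ((g i) ^ c) ^ (1 / c) :=
          ENNReal.rpow_le_rpow (iInf_le _ i) (by positivity)
      _ = g i := by
          rw [← ENNReal.rpow_mul, mul_one_div, div_self hc.ne', ENNReal.rpow_one]
  calc ⨅ i, (g i) ^ c = (((⨅ i, (g i) ^ c) ^ (1 / c)) : ℝ≥0∞) ^ c := by
        rw [← ENNReal.rpow_mul, one_div_mul_cancel hc.ne', ENNReal.rpow_one]
    _ ≤ (⨅ i, g i) ^ c := ENNReal.rpow_le_rpow h hc.le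

lemma MK_le_cost {α : Type*} [PseudoEMetricSpace α] [MeasurableSpace α] {p : ℝ} (hp : 1 ≤ p)
    {μ ν : Measure α} {γ : Measure (α × α)} (h : γ ∈ couplings μ ν) :
    MK p μ ν ≤ (∫⁻ z, edist z.1 z.2 ^ p ∂γ) ^ (1 / p) :=
  ENNReal.rpow_le_rpow (iInf₂_le γ h) (by positivity)

lemma lp_triple {α : Type*} [MeasurableSpace α] (m : Measure α) {p : ℝ} (hp : 1 ≤ p)
    {A B C D : α → ℝ≥0∞} (hA : AEMeasurable A m) (hB : AEMeasurable B m)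
    (hC : AEMeasurable C m) (hle : ∀ z, D z ≤ A z + B z + C z) :
    (∫⁻ z, D z ^ p ∂m) ^ (1 / p) ≤
      (∫⁻ z, A z ^ p ∂m) ^ (1 / p) + (∫⁻ z, B z ^ p ∂m) ^ (1 / p)
        + (∫⁻ z, C z ^ p ∂m) ^ (1 / p) := by
  have h0 : (0:ℝ) < p := lt_of_lt_of_le one_pos hp
  calc (∫⁻ z, D z ^ p ∂m) ^ (1 / p)
      ≤ (∫⁻ z, ((A + B) + C) z ^ p ∂m) ^ (1 / p) := by
        refine ENNReal.rpow_le_rpow (lintegral_mono fun z => ?_) (by positivity)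
        exact ENNReal.rpow_le_rpow (hle z) h0.le
    _ ≤ (∫⁻ z, (A + B) z ^ p ∂m) ^ (1 / p) + (∫⁻ z, C z ^ p ∂m) ^ (1 / p) :=
        ENNReal.lintegral_Lp_add_le (hA.add hB) hC hp
    _ ≤ ((∫⁻ z, A z ^ p ∂m) ^ (1 / p) + (∫⁻ z, B z ^ p ∂m) ^ (1 / p))
          + (∫⁻ z, C z ^ p ∂m) ^ (1 / p) :=
        add_le_add_left (ENNReal.lintegral_Lp_add_le hA hB hp) _

section Euclid

variable {n : ℕ}

local notation "E'" => EuclideanSpace ℝ (Fin n)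

lemma inner_meas (v : E') : Measurable fun x : E' => ⟪x, v⟫ :=
  (continuous_id.inner continuous_const).measurable

/-- moment bound for one slice term -/
lemma slice_moment_le {μ : Measure E'} (p : ℝ) (hp0 : (0:ℝ) ≤ p) (v : E') (hv : ‖v‖₊ ≤ 1) :
    ∫⁻ x, (‖⟪x, v⟫‖₊ : ℝ≥0∞) ^ p ∂μ ≤ ∫⁻ x, (‖x‖₊ : ℝ≥0∞) ^ p ∂μ := by
  refine lintegral_mono fun x => ENNReal.rpow_le_rpow ?_ hp0
  refine ENNReal.coe_le_coe.2 ?_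
  calc ‖⟪x, v⟫‖₊ ≤ ‖x‖₊ * ‖v‖₊ := nnnorm_inner_le_nnnorm _ _
    _ ≤ ‖x‖₊ * 1 := mul_le_mul_right hv _
    _ = ‖x‖₊ := mul_one _

lemma MK_slice_bound (p : ℝ) (hp : 1 ≤ p) (μ ν : Measure E')
    [IsProbabilityMeasure μ] [IsProbabilityMeasure ν] (v : E') (hv : ‖v‖₊ ≤ 1) :
    MK p (μ.map fun x => ⟪x, v⟫) (ν.map fun x => ⟪x, v⟫) ≤
      (∫⁻ x, (‖x‖₊ : ℝ≥0∞) ^ p ∂μ) ^ (1/p) + (∫⁻ x, (‖x‖₊ : ℝ≥0∞) ^ p ∂ν) ^ (1/p) := by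
  have h0 : (0:ℝ) < p := lt_of_lt_of_le one_pos hp
  haveI : IsProbabilityMeasure (μ.map fun x : E' => ⟪x, v⟫) :=
    Measure.isProbabilityMeasure_map (inner_meas v).aemeasurable
  haveI : IsProbabilityMeasure (ν.map fun x : E' => ⟪x, v⟫) :=
    Measure.isProbabilityMeasure_map (inner_meas v).aemeasurable
  set μv := μ.map fun x : E' => ⟪x, v⟫
  set νv := ν.map fun x : E' => ⟪x, v⟫
  have hmem : μv.prod νv ∈ couplings μv νv := by
    constructor <;> simp [Measure.map_fst_prod, Measure.map_snd_prod]
  refine (MK_le_cost hp hmem).trans ?_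
  have tri := lp_triple (μv.prod νv) hp (A := fun z => (‖z.1‖₊ : ℝ≥0∞))
    (B := fun z => (‖z.2‖₊ : ℝ≥0∞)) (C := fun _ => 0) (D := fun z => edist z.1 z.2)
    (measurable_fst.nnnorm.coe_nnreal_ennreal).aemeasurable (measurable_snd.nnnorm.coe_nnreal_ennreal).aemeasurable
    aemeasurable_const (fun z => ?_)
  · refine tri.trans ?_
    have hz : ∀ q : ℝ, 0 < q → (∫⁻ z : ℝ × ℝ, (0:ℝ≥0∞) ^ q ∂(μv.prod νv)) ^ (1/q) = 0 := by
      intro q hq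
      rw [lintegral_congr (fun z : ℝ × ℝ => ENNReal.zero_rpow_of_pos hq), lintegral_zero,
        ENNReal.zero_rpow_of_pos (one_div_pos.mpr hq)]
    rw [hz p h0, add_zero]
    gcongr
    · have h1 : ∫⁻ z : ℝ × ℝ, (‖z.1‖₊ : ℝ≥0∞) ^ p ∂(μv.prod νv)
          = ∫⁻ t, (‖t‖₊ : ℝ≥0∞) ^ p ∂μv := by
        rw [← lintegral_map (measurable_nnnorm.coe_nnreal_ennreal.pow_const p) measurable_fst,
          Measure.map_fst_prod, measure_univ, one_smul]
      rw [h1]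
      have h2 : ∫⁻ t, (‖t‖₊ : ℝ≥0∞) ^ p ∂μv = ∫⁻ x, (‖⟪x, v⟫‖₊ : ℝ≥0∞) ^ p ∂μ :=
        lintegral_map (measurable_nnnorm.coe_nnreal_ennreal.pow_const p) (inner_meas v)
      rw [h2]
      exact slice_moment_le p h0.le v hv
    · have h1 : ∫⁻ z : ℝ × ℝ, (‖z.2‖₊ : ℝ≥0∞) ^ p ∂(μv.prod νv)
          = ∫⁻ t, (‖t‖₊ : ℝ≥0∞) ^ p ∂νv := by
        rw [← lintegral_map (measurable_nnnorm.coe_nnreal_ennreal.pow_const p) measurable_snd,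
          Measure.map_snd_prod, measure_univ, one_smul]
      rw [h1]
      have h2 : ∫⁻ t, (‖t‖₊ : ℝ≥0∞) ^ p ∂νv = ∫⁻ x, (‖⟪x, v⟫‖₊ : ℝ≥0∞) ^ p ∂ν :=
        lintegral_map (measurable_nnnorm.coe_nnreal_ennreal.pow_const p) (inner_meas v)
      rw [h2]
      exact slice_moment_le p h0.le v hv
  · -- pointwise bound
    show edist z.1 z.2 ≤ (‖z.1‖₊ : ℝ≥0∞) + (‖z.2‖₊ : ℝ≥0∞) + 0
    rw [add_zero, edist_eq_enorm_sub, enorm_eq_nnnorm, ← ENNReal.coe_add, ENNReal.coe_le_coe]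
    exact nnnorm_sub_le _ _

lemma MK_lip (p : ℝ) (hp : 1 ≤ p) (μ ν : Measure E')
    [IsProbabilityMeasure μ] [IsProbabilityMeasure ν] (v w : E') :
    MK p (μ.map fun x => ⟪x, v⟫) (ν.map fun x => ⟪x, v⟫) ≤
      MK p (μ.map fun x => ⟪x, w⟫) (ν.map fun x => ⟪x, w⟫) +
      (‖v - w‖₊ : ℝ≥0∞) * ((∫⁻ x, (‖x‖₊ : ℝ≥0∞) ^ p ∂μ) ^ (1/p)
        + (∫⁻ x, (‖x‖₊ : ℝ≥0∞) ^ p ∂ν) ^ (1/p)) := by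
  have h0 : (0:ℝ) < p := lt_of_lt_of_le one_pos hp
  have h1p : (0:ℝ) < 1/p := one_div_pos.mpr h0
  have hfv := inner_meas (n := n) v
  have hfw := inner_meas (n := n) w
  have hfvw := inner_meas (n := n) (v - w)
  set d := (‖v - w‖₊ : ℝ≥0∞) with hd
  set Mμ := (∫⁻ x, (‖x‖₊ : ℝ≥0∞) ^ p ∂μ) ^ (1/p) with hMμ
  set Mν := (∫⁻ x, (‖x‖₊ : ℝ≥0∞) ^ p ∂ν) ^ (1/p) with hMν
  have key : ∀ γ ∈ couplings (μ.map fun x : E' => ⟪x, w⟫) (ν.map fun x : E' => ⟪x, w⟫),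
      MK p (μ.map fun x : E' => ⟪x, v⟫) (ν.map fun x : E' => ⟪x, v⟫) ≤
        (∫⁻ z, edist z.1 z.2 ^ p ∂γ) ^ (1/p) + d * (Mμ + Mν) := by
    intro γ hγ
    obtain ⟨π, hπ1, hπ2, hπ3⟩ := lift_coupling μ ν hfw γ hγ.1 hγ.2
    have hπmem : π.map (Prod.map (fun x : E' => ⟪x, v⟫) (fun x : E' => ⟪x, v⟫))
        ∈ couplings (μ.map fun x : E' => ⟪x, v⟫) (ν.map fun x : E' => ⟪x, v⟫) := by
      constructor
      · have e1 : (π.map (Prod.map (fun x : E' => ⟪x, v⟫) (fun x : E' => ⟪x, v⟫))).map Prod.fst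
            = π.map ((fun x : E' => ⟪x, v⟫) ∘ Prod.fst) := by
          rw [Measure.map_map measurable_fst (hfv.prodMap hfv)]
          rfl
        rw [e1, ← Measure.map_map hfv measurable_fst, hπ1]
      · have e1 : (π.map (Prod.map (fun x : E' => ⟪x, v⟫) (fun x : E' => ⟪x, v⟫))).map Prod.snd
            = π.map ((fun x : E' => ⟪x, v⟫) ∘ Prod.snd) := by
          rw [Measure.map_map measurable_snd (hfv.prodMap hfv)]
          rfl
        rw [e1, ← Measure.map_map hfv measurable_snd, hπ2]
    refine (MK_le_cost hp hπmem).trans ?_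
    have hcost : ∫⁻ z, edist z.1 z.2 ^ p
          ∂(π.map (Prod.map (fun x : E' => ⟪x, v⟫) (fun x : E' => ⟪x, v⟫)))
        = ∫⁻ z : E' × E', (edist ⟪z.1, v⟫ ⟪z.2, v⟫) ^ p ∂π := by
      rw [lintegral_map ((measurable_fst.edist measurable_snd).pow_const p)
        (hfv.prodMap hfv)]
      rfl
    rw [hcost]
    have hpt : ∀ z : E' × E', edist ⟪z.1, v⟫ ⟪z.2, v⟫ ≤
        edist ⟪z.1, w⟫ ⟪z.2, w⟫ + (‖⟪z.1, v - w⟫‖₊ : ℝ≥0∞) + (‖⟪z.2, v - w⟫‖₊ : ℝ≥0∞) := by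
      intro z
      have hsplit : ⟪z.1, v⟫ - ⟪z.2, v⟫
          = (⟪z.1, w⟫ - ⟪z.2, w⟫) + (⟪z.1, v - w⟫ - ⟪z.2, v - w⟫) := by
        simp only [inner_sub_right]; ring
      have hnn : ‖⟪z.1, v⟫ - ⟪z.2, v⟫‖₊ ≤
          ‖⟪z.1, w⟫ - ⟪z.2, w⟫‖₊ + (‖⟪z.1, v - w⟫‖₊ + ‖⟪z.2, v - w⟫‖₊) := by
        rw [hsplit]
        exact (nnnorm_add_le _ _).trans (add_le_add le_rfl (nnnorm_sub_le _ _))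
      calc edist ⟪z.1, v⟫ ⟪z.2, v⟫ = (‖⟪z.1, v⟫ - ⟪z.2, v⟫‖₊ : ℝ≥0∞) :=
            by rw [edist_eq_enorm_sub, enorm_eq_nnnorm]
        _ ≤ ((‖⟪z.1, w⟫ - ⟪z.2, w⟫‖₊ + (‖⟪z.1, v - w⟫‖₊ + ‖⟪z.2, v - w⟫‖₊) : ℝ≥0) : ℝ≥0∞) :=
            ENNReal.coe_le_coe.2 hnn
        _ = edist ⟪z.1, w⟫ ⟪z.2, w⟫ + (‖⟪z.1, v - w⟫‖₊ : ℝ≥0∞) + (‖⟪z.2, v - w⟫‖₊ : ℝ≥0∞) := by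
            rw [edist_eq_enorm_sub, enorm_eq_nnnorm]
            push_cast
            ring
    have tri := lp_triple π hp
      (A := fun z : E' × E' => edist ⟪z.1, w⟫ ⟪z.2, w⟫)
      (B := fun z : E' × E' => (‖⟪z.1, v - w⟫‖₊ : ℝ≥0∞))
      (C := fun z : E' × E' => (‖⟪z.2, v - w⟫‖₊ : ℝ≥0∞))
      (D := fun z : E' × E' => edist ⟪z.1, v⟫ ⟪z.2, v⟫)
      ((hfw.comp measurable_fst).edist (hfw.comp measurable_snd)).aemeasurable
      ((hfvw.comp measurable_fst).nnnorm.coe_nnreal_ennreal).aemeasurable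
      ((hfvw.comp measurable_snd).nnnorm.coe_nnreal_ennreal).aemeasurable
      hpt
    refine tri.trans ?_
    have hA : ∫⁻ z : E' × E', (edist ⟪z.1, w⟫ ⟪z.2, w⟫) ^ p ∂π
        = ∫⁻ z, edist z.1 z.2 ^ p ∂γ := by
      rw [← hπ3, lintegral_map ((measurable_fst.edist measurable_snd).pow_const p)
        (hfw.prodMap hfw)]
      rfl
    have hBgen : ∀ (σ : Measure E') (pr : E' × E' → E'), Measurable pr →
        π.map pr = σ →
        (∫⁻ z : E' × E', (‖⟪pr z, v - w⟫‖₊ : ℝ≥0∞) ^ p ∂π) ^ (1/p) ≤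
          d * (∫⁻ x, (‖x‖₊ : ℝ≥0∞) ^ p ∂σ) ^ (1/p) := by
      intro σ pr hpr hmap
      have step1 : ∫⁻ z : E' × E', (‖⟪pr z, v - w⟫‖₊ : ℝ≥0∞) ^ p ∂π
          ≤ ∫⁻ z : E' × E', ((‖pr z‖₊ : ℝ≥0∞) ^ p) * d ^ p ∂π := by
        refine lintegral_mono fun z => ?_
        rw [← ENNReal.mul_rpow_of_nonneg _ _ h0.le]
        refine ENNReal.rpow_le_rpow ?_ h0.le
        rw [hd, ← ENNReal.coe_mul, ENNReal.coe_le_coe]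
        exact nnnorm_inner_le_nnnorm _ _
      have step2 : ∫⁻ z : E' × E', ((‖pr z‖₊ : ℝ≥0∞) ^ p) * d ^ p ∂π
          = (∫⁻ x, (‖x‖₊ : ℝ≥0∞) ^ p ∂σ) * d ^ p := by
        rw [lintegral_mul_const _ ((hpr.nnnorm.coe_nnreal_ennreal).pow_const p), ← hmap,
          lintegral_map (measurable_nnnorm.coe_nnreal_ennreal.pow_const p) hpr]
      calc (∫⁻ z : E' × E', (‖⟪pr z, v - w⟫‖₊ : ℝ≥0∞) ^ p ∂π) ^ (1/p)
          ≤ ((∫⁻ x, (‖x‖₊ : ℝ≥0∞) ^ p ∂σ) * d ^ p) ^ (1/p) :=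
            ENNReal.rpow_le_rpow (step1.trans_eq step2) h1p.le
        _ = d * (∫⁻ x, (‖x‖₊ : ℝ≥0∞) ^ p ∂σ) ^ (1/p) := by
            rw [ENNReal.mul_rpow_of_nonneg _ _ h1p.le, ← ENNReal.rpow_mul,
              mul_one_div, div_self h0.ne', ENNReal.rpow_one, mul_comm]
    have hB := hBgen μ Prod.fst measurable_fst hπ1
    have hC := hBgen ν Prod.snd measurable_snd hπ2
    rw [hA]
    calc (∫⁻ z, edist z.1 z.2 ^ p ∂γ) ^ (1/p)
          + (∫⁻ z : E' × E', (‖⟪z.1, v - w⟫‖₊ : ℝ≥0∞) ^ p ∂π) ^ (1/p)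
          + (∫⁻ z : E' × E', (‖⟪z.2, v - w⟫‖₊ : ℝ≥0∞) ^ p ∂π) ^ (1/p)
        ≤ (∫⁻ z, edist z.1 z.2 ^ p ∂γ) ^ (1/p) + d * Mμ + d * Mν := by
          exact add_le_add (add_le_add le_rfl hB) hC
      _ = (∫⁻ z, edist z.1 z.2 ^ p ∂γ) ^ (1/p) + d * (Mμ + Mν) := by
          rw [mul_add, add_assoc]
  calc MK p (μ.map fun x : E' => ⟪x, v⟫) (ν.map fun x : E' => ⟪x, v⟫)
      ≤ ⨅ γ ∈ couplings (μ.map fun x : E' => ⟪x, w⟫) (ν.map fun x : E' => ⟪x, w⟫),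
          ((∫⁻ z, edist z.1 z.2 ^ p ∂γ) ^ (1/p) + d * (Mμ + Mν)) := le_iInf₂ key
    _ = MK p (μ.map fun x : E' => ⟪x, w⟫) (ν.map fun x : E' => ⟪x, w⟫) + d * (Mμ + Mν) := by
        rw [MK]
        simp_rw [iInf_rpow_comm _ h1p, ENNReal.iInf_add]

end Euclid

end AllAux


open scoped Topology in
/-- the map `ω ↦ MK_p^ℝ(R^ω_♯μ, R^ω_♯ν)` is continuous on the sphere. -/
theorem slice_distance_continuous (p : ℝ) (hp : 1 ≤ p) (n : ℕ) (hn : 1 ≤ n)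
    (μ ν : Measure (EuclideanSpace ℝ (Fin n))) (hμ : MemPp p μ) (hν : MemPp p ν) :
    Continuous (fun ω : unitSphere n => MK p (radon μ ω) (radon ν ω)) := by
  haveI := hμ.1
  haveI := hν.1
  have h0 : (0:ℝ) < p := lt_of_lt_of_le one_pos hp
  have h1p : (0:ℝ) < 1/p := one_div_pos.mpr h0
  set Mμ := (∫⁻ x, (‖x‖₊ : ℝ≥0∞) ^ p ∂μ) ^ (1/p) with hMμdef
  set Mν := (∫⁻ x, (‖x‖₊ : ℝ≥0∞) ^ p ∂ν) ^ (1/p) with hMνdef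
  have hMμ : Mμ ≠ ∞ := ENNReal.rpow_ne_top_of_nonneg h1p.le hμ.2
  have hMν : Mν ≠ ∞ := ENNReal.rpow_ne_top_of_nonneg h1p.le hν.2
  have hK : Mμ + Mν ≠ ∞ := ENNReal.add_ne_top.2 ⟨hMμ, hMν⟩
  have hnorm : ∀ ω : unitSphere n, ‖(ω : EuclideanSpace ℝ (Fin n))‖₊ ≤ 1 := by
    intro ω
    have h := mem_sphere_zero_iff_norm.mp ω.2
    rw [← NNReal.coe_le_coe, coe_nnnorm, h]
    exact le_refl 1
  have hbound : ∀ ω : unitSphere n, MK p (radon μ ω) (radon ν ω) ≤ Mμ + Mν := fun ω =>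
    MK_slice_bound p hp μ ν _ (hnorm ω)
  have lip : ∀ ω₁ ω₂ : unitSphere n, MK p (radon μ ω₁) (radon ν ω₁) ≤
      MK p (radon μ ω₂) (radon ν ω₂) + edist ω₁ ω₂ * (Mμ + Mν) := by
    intro ω₁ ω₂
    have h := MK_lip p hp μ ν (ω₁ : EuclideanSpace ℝ (Fin n)) (ω₂ : EuclideanSpace ℝ (Fin n))
    rw [show edist ω₁ ω₂ =
        ((‖(ω₁ : EuclideanSpace ℝ (Fin n)) - (ω₂ : EuclideanSpace ℝ (Fin n))‖₊ : ℝ≥0∞)) from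
      by rw [Subtype.edist_eq, edist_eq_enorm_sub, enorm_eq_nnnorm]]
    exact h
  rw [continuous_iff_continuousAt]
  intro ω₀
  have ha : MK p (radon μ ω₀) (radon ν ω₀) ≠ ∞ := ne_top_of_le_ne_top hK (hbound ω₀)
  refine (ENNReal.tendsto_nhds ha).2 fun ε hε => ?_
  have hedist : Tendsto (fun ω : unitSphere n => edist ω ω₀ * (Mμ + Mν)) (𝓝 ω₀) (𝓝 0) := by
    have h1 : Tendsto (fun ω : unitSphere n => edist ω ω₀) (𝓝 ω₀) (𝓝 (edist ω₀ ω₀)) :=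
      (continuous_id.edist continuous_const).tendsto ω₀
    rw [edist_self] at h1
    have h2 := ENNReal.Tendsto.mul_const h1 (Or.inr hK)
    simpa using h2
  filter_upwards [hedist.eventually_lt_const hε] with ω hω
  constructor
  · rw [tsub_le_iff_right]
    calc MK p (radon μ ω₀) (radon ν ω₀)
        ≤ MK p (radon μ ω) (radon ν ω) + edist ω₀ ω * (Mμ + Mν) := lip ω₀ ω
      _ ≤ MK p (radon μ ω) (radon ν ω) + ε := by
          rw [edist_comm]; exact add_le_add_right hω.le _
  · calc MK p (radon μ ω) (radon ν ω)
        ≤ MK p (radon μ ω₀) (radon ν ω₀) + edist ω ω₀ * (Mμ + Mν) := lip ω ω₀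
      _ ≤ MK p (radon μ ω₀) (radon ν ω₀) + ε := add_le_add_right hω.le _

end
end

section
/- Let 1 ≤ p < ∞, 1 ≤ q ≤ ∞, n ∈ ℕ and set M_{q,n} := ‖ω ↦ ⟨e₁,ω⟩‖_{L^q(σ_{n−1})}. Then for all μ, ν ∈ 𝒫_p(ℝ^n), MK_{p,q}(μ,ν) ≤ M_{max{p,q},n} · MK_p^{ℝ^n}(μ,ν). Moreover, for any x₀ ∈ ℝ^n and μ ∈ 𝒫_p(ℝ^n), equality MK_{p,p}(δ_{x₀}, μ) = M_{p,n} · MK_p^{ℝ^n}(δ_{x₀}, μ) holds, where δ_{x₀} is the Dirac measure at x₀. -/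
open MeasureTheory ENNReal Filter
open scoped RealInnerProductSpace BoundedContinuousFunction NNReal

noncomputable section

open Set Metric
open scoped Pointwise

namespace SMK
-- chunk1

lemma ofReal_norm_eq_coe_nnnorm {E : Type*} [SeminormedAddCommGroup E] (a : E) :
    ENNReal.ofReal ‖a‖ = ((‖a‖₊ : ℝ≥0) : ℝ≥0∞) :=
  ENNReal.ofReal_eq_coe_nnreal (norm_nonneg a)

lemma edist_eq_coe_nnnorm_sub {E : Type*} [SeminormedAddCommGroup E] (a b : E) :
    edist a b = ((‖a - b‖₊ : ℝ≥0) : ℝ≥0∞) := by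
  rw [edist_dist, dist_eq_norm]; exact ofReal_norm_eq_coe_nnnorm _


variable {α β : Type*} [MeasurableSpace α] [MeasurableSpace β]

lemma coupling_prob {μ : Measure α} {ν : Measure β} [IsProbabilityMeasure μ]
    {γ : Measure (α × β)} (hγ : γ ∈ couplings μ ν) : IsProbabilityMeasure γ := by
  constructor
  have h : γ.map Prod.fst Set.univ = 1 := by rw [hγ.1]; exact measure_univ
  rwa [Measure.map_apply measurable_fst .univ, Set.preimage_univ] at h

lemma prod_mem_couplings (μ : Measure α) (ν : Measure β) [IsProbabilityMeasure μ]
    [IsProbabilityMeasure ν] : μ.prod ν ∈ couplings μ ν := by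
  constructor
  · rw [Measure.map_fst_prod]; simp
  · rw [Measure.map_snd_prod]; simp

lemma map_mem_couplings {μ : Measure α} {ν : Measure β} {γ : Measure (α × β)}
    (hγ : γ ∈ couplings μ ν) {α' β' : Type*} [MeasurableSpace α'] [MeasurableSpace β']
    {f : α → α'} {g : β → β'} (hf : Measurable f) (hg : Measurable g) :
    γ.map (Prod.map f g) ∈ couplings (μ.map f) (ν.map g) := by
  constructor
  · rw [Measure.map_map measurable_fst (hf.prodMap hg),
      show Prod.fst ∘ Prod.map f g = f ∘ Prod.fst from rfl,
      ← Measure.map_map hf measurable_fst, hγ.1]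
  · rw [Measure.map_map measurable_snd (hf.prodMap hg),
      show Prod.snd ∘ Prod.map f g = g ∘ Prod.snd from rfl,
      ← Measure.map_map hg measurable_snd, hγ.2]

lemma MK_le_coupling {p : ℝ} (hp : 0 < p) {α : Type*} [PseudoEMetricSpace α] [MeasurableSpace α]
    {μ ν : Measure α} {γ : Measure (α × α)} (hγ : γ ∈ couplings μ ν) :
    MK p μ ν ≤ (∫⁻ z, edist z.1 z.2 ^ p ∂γ) ^ (1 / p) :=
  ENNReal.rpow_le_rpow (iInf₂_le γ hγ) (by positivity)

lemma lintegral_coupling_dirac [MeasurableSingletonClass α] {a : α} {ν : Measure β}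
    {γ : Measure (α × β)} (hγ : γ ∈ couplings (Measure.dirac a) ν)
    {F : α → β → ℝ≥0∞} (hF : Measurable (Function.uncurry F)) :
    ∫⁻ z, F z.1 z.2 ∂γ = ∫⁻ y, F a y ∂ν := by
  have hae : ∀ᵐ z ∂γ, z.1 = a := by
    rw [ae_iff]
    have : {z : α × β | ¬ z.1 = a} = Prod.fst ⁻¹' {a}ᶜ := rfl
    rw [this, ← Measure.map_apply measurable_fst (measurableSet_singleton a).compl, hγ.1,
      Measure.dirac_apply' _ (measurableSet_singleton a).compl]
    simp
  calc ∫⁻ z, F z.1 z.2 ∂γ = ∫⁻ z, F a z.2 ∂γ := by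
        refine lintegral_congr_ae ?_
        filter_upwards [hae] with z hz
        rw [hz]
    _ = ∫⁻ y, F a y ∂(γ.map Prod.snd) := by
        rw [lintegral_map (by exact hF.comp (measurable_const.prodMk measurable_id))
          measurable_snd]
    _ = ∫⁻ y, F a y ∂ν := by rw [hγ.2]

lemma MK_dirac {α : Type*} [PseudoEMetricSpace α] [MeasurableSpace α] [OpensMeasurableSpace α]
    [SecondCountableTopology α]
    [MeasurableSingletonClass α] (p : ℝ) (a : α) (ρ : Measure α) [IsProbabilityMeasure ρ] :
    MK p (Measure.dirac a) ρ = (∫⁻ y, edist a y ^ p ∂ρ) ^ (1 / p) := by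
  have hmeas : Measurable fun z : α × α => edist z.1 z.2 ^ p :=
    measurable_edist.pow_const p
  unfold MK
  congr 1
  apply le_antisymm
  · have hγ : ρ.map (fun y => (a, y)) ∈ couplings (Measure.dirac a) ρ := by
      constructor
      · rw [Measure.map_map measurable_fst measurable_prodMk_left,
          show Prod.fst ∘ (fun y : α => (a, y)) = fun _ => a from rfl, Measure.map_const]
        simp
      · rw [Measure.map_map measurable_snd measurable_prodMk_left,
          show Prod.snd ∘ (fun y : α => (a, y)) = id from rfl, Measure.map_id]
    exact le_trans (iInf₂_le _ hγ) (le_of_eq (lintegral_map hmeas measurable_prodMk_left))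
  · exact le_iInf₂ fun γ hγ => (lintegral_coupling_dirac hγ (F := fun x y => edist x y ^ p) hmeas).ge


-- chunk2


lemma cone_eq {E : Type*} [NormedAddCommGroup E] [NormedSpace ℝ E]
    (s : Set (sphere (0:E) 1)) (r : Set.Ioi (0:ℝ)) :
    (Subtype.val '' (homeomorphUnitSphereProd E ⁻¹' (s ×ˢ Iio r))) =
      Ioo (0 : ℝ) r • (Subtype.val '' s) := by
  rw [← image2_smul, image2_image_right, ← Homeomorph.image_symm, image_image,
    ← image_subtype_val_Ioi_Iio, image2_image_left, image2_swap, ← image_prod]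
  rfl

variable {n : ℕ}

def sphereMap (O : EuclideanSpace ℝ (Fin n) ≃ₗᵢ[ℝ] EuclideanSpace ℝ (Fin n)) :
    unitSphere n → unitSphere n :=
  fun ω => ⟨O ω, by
    have : ‖(ω : EuclideanSpace ℝ (Fin n))‖ = 1 := by
      simpa [mem_sphere_iff_norm] using ω.2
    simp [mem_sphere_iff_norm, O.norm_map, this]⟩

lemma continuous_sphereMap (O : EuclideanSpace ℝ (Fin n) ≃ₗᵢ[ℝ] EuclideanSpace ℝ (Fin n)) :
    Continuous (sphereMap O) :=
  Continuous.subtype_mk (O.continuous.comp continuous_subtype_val) _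

lemma coe_image_preimage (O : EuclideanSpace ℝ (Fin n) ≃ₗᵢ[ℝ] EuclideanSpace ℝ (Fin n))
    (s : Set (unitSphere n)) :
    Subtype.val '' (sphereMap O ⁻¹' s) = ⇑O ⁻¹' (Subtype.val '' s) := by
  ext x
  constructor
  · rintro ⟨ω, hω, rfl⟩
    exact ⟨sphereMap O ω, hω, rfl⟩
  · rintro ⟨ω', hω', hx⟩
    have hx1 : ‖x‖ = 1 := by
      have h1 : ‖(ω' : EuclideanSpace ℝ (Fin n))‖ = 1 := by
        simpa [mem_sphere_iff_norm] using ω'.2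
      have := congrArg norm hx
      rw [O.norm_map] at this
      rw [← this, h1]
    refine ⟨⟨x, by simp [mem_sphere_iff_norm, hx1]⟩, ?_, rfl⟩
    show sphereMap O _ ∈ s
    have : sphereMap O ⟨x, by simp [mem_sphere_iff_norm, hx1]⟩ = ω' := by
      apply Subtype.ext
      exact hx.symm
    rwa [this]

lemma smul_preimage (O : EuclideanSpace ℝ (Fin n) ≃ₗᵢ[ℝ] EuclideanSpace ℝ (Fin n))
    (I : Set ℝ) (A : Set (EuclideanSpace ℝ (Fin n))) :
    I • (⇑O ⁻¹' A) = ⇑O ⁻¹' (I • A) := by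
  ext x
  constructor
  · rintro ⟨r, hr, b, hb, rfl⟩
    exact ⟨r, hr, O b, hb, (O.map_smul r b).symm⟩
  · rintro ⟨r, hr, a, ha, hOx⟩
    refine ⟨r, hr, O.symm a, by simpa using ha, ?_⟩
    have hx : x = O.symm (r • a) := by
      have := congrArg O.symm hOx
      simpa using this.symm
    rw [hx]
    exact (O.symm.map_smul r a).symm

lemma toSphere_map (O : EuclideanSpace ℝ (Fin n) ≃ₗᵢ[ℝ] EuclideanSpace ℝ (Fin n)) :
    ((volume : Measure (EuclideanSpace ℝ (Fin n))).toSphere).map (sphereMap O) =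
      (volume : Measure (EuclideanSpace ℝ (Fin n))).toSphere := by
  ext s hs
  rw [Measure.map_apply (continuous_sphereMap O).measurable hs,
    Measure.toSphere_apply' _ (hs.preimage (continuous_sphereMap O).measurable),
    Measure.toSphere_apply' _ hs]
  congr 1
  rw [coe_image_preimage, smul_preimage]
  have hmeas : MeasurableSet (Ioo (0 : ℝ) (1 : ℝ) • (Subtype.val '' s) :
      Set (EuclideanSpace ℝ (Fin n))) := by
    rw [show Ioo (0:ℝ) (1:ℝ) = Ioo (0:ℝ) ((⟨1, mem_Ioi.2 one_pos⟩ : Set.Ioi (0:ℝ)) : ℝ) from rfl,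
      ← cone_eq s ⟨1, mem_Ioi.2 one_pos⟩]
    exact (MeasurableEmbedding.subtype_coe (measurableSet_singleton (0 :
      EuclideanSpace ℝ (Fin n))).compl).measurableSet_image.mpr
      ((homeomorphUnitSphereProd _).measurable (hs.prod measurableSet_Iio))
  exact O.measurePreserving.measure_preimage hmeas.nullMeasurableSet

lemma sphereProb_map (O : EuclideanSpace ℝ (Fin n) ≃ₗᵢ[ℝ] EuclideanSpace ℝ (Fin n)) :
    (sphereProb n).map (sphereMap O) = sphereProb n := by
  unfold sphereProb
  rw [Measure.map_smul, toSphere_map]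

lemma toSphere_univ_pos (hn : 1 ≤ n) :
    0 < (volume : Measure (EuclideanSpace ℝ (Fin n))).toSphere Set.univ := by
  rw [Measure.toSphere_apply_univ]
  have h1 : (0:ℝ≥0∞) < (Module.finrank ℝ (EuclideanSpace ℝ (Fin n)) : ℝ≥0∞) := by
    rw [finrank_euclideanSpace_fin]
    exact_mod_cast Nat.pos_of_ne_zero (by omega)
  exact ENNReal.mul_pos h1.ne' (measure_ball_pos volume 0 one_pos).ne'

lemma toSphere_univ_ne_top :
    (volume : Measure (EuclideanSpace ℝ (Fin n))).toSphere Set.univ ≠ ∞ :=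
  measure_ne_top _ _

lemma sphereProb_isProbability (hn : 1 ≤ n) : IsProbabilityMeasure (sphereProb n) := by
  constructor
  unfold sphereProb
  rw [Measure.smul_apply, smul_eq_mul, ENNReal.inv_mul_cancel (toSphere_univ_pos hn).ne'
    toSphere_univ_ne_top]



-- chunk3

lemma measurable_inner_sphere (u : EuclideanSpace ℝ (Fin n)) :
    Measurable fun ω : unitSphere n => (‖⟪u, (ω : EuclideanSpace ℝ (Fin n))⟫‖₊ : ℝ≥0∞) :=
  ((continuous_const.inner continuous_subtype_val).measurable).nnnorm.coe_nnreal_ennreal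

lemma exists_isometry_eq {u v : EuclideanSpace ℝ (Fin n)} (h : ‖u‖ = ‖v‖) :
    ∃ O : EuclideanSpace ℝ (Fin n) ≃ₗᵢ[ℝ] EuclideanSpace ℝ (Fin n), O u = v :=
  ⟨Submodule.reflection (ℝ ∙ (u - v))ᗮ, Submodule.reflection_sub h⟩

lemma norm_coe_sphere (ω : unitSphere n) : ‖(ω : EuclideanSpace ℝ (Fin n))‖ = 1 := by
  simpa [mem_sphere_iff_norm] using ω.2

lemma lintegral_inner_rpow (u : EuclideanSpace ℝ (Fin n)) {e : EuclideanSpace ℝ (Fin n)}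
    (he : ‖e‖ = 1) {t : ℝ} (ht : 0 < t) :
    ∫⁻ ω, (‖⟪u, (ω : EuclideanSpace ℝ (Fin n))⟫‖₊ : ℝ≥0∞) ^ t ∂(sphereProb n) =
      (‖u‖₊ : ℝ≥0∞) ^ t *
        ∫⁻ ω, (‖⟪e, (ω : EuclideanSpace ℝ (Fin n))⟫‖₊ : ℝ≥0∞) ^ t ∂(sphereProb n) := by
  by_cases hu : u = 0
  · simp [hu, ENNReal.zero_rpow_of_pos ht]
  · set v : EuclideanSpace ℝ (Fin n) := ‖u‖⁻¹ • u with hv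
    have hvnorm : ‖v‖ = 1 := norm_smul_inv_norm hu
    obtain ⟨O, hO⟩ := exists_isometry_eq (he.trans hvnorm.symm)
    have hcalc : ∀ ω : unitSphere n,
        (‖⟪u, ((sphereMap O ω) : EuclideanSpace ℝ (Fin n))⟫‖₊ : ℝ≥0∞) ^ t
          = (‖u‖₊ : ℝ≥0∞) ^ t * (‖⟪e, (ω : EuclideanSpace ℝ (Fin n))⟫‖₊ : ℝ≥0∞) ^ t := by
      intro ω
      have huv : u = ‖u‖ • v := by
        rw [hv, smul_smul, mul_inv_cancel₀ (norm_ne_zero_iff.mpr hu), one_smul]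
      have h1 : ⟪u, ((sphereMap O ω) : EuclideanSpace ℝ (Fin n))⟫
          = ‖u‖ * ⟪e, (ω : EuclideanSpace ℝ (Fin n))⟫ := by
        calc ⟪u, ((sphereMap O ω) : EuclideanSpace ℝ (Fin n))⟫
            = ⟪‖u‖ • v, O (ω : EuclideanSpace ℝ (Fin n))⟫ := by rw [← huv]; rfl
          _ = ‖u‖ * ⟪v, O (ω : EuclideanSpace ℝ (Fin n))⟫ := real_inner_smul_left _ _ _
          _ = ‖u‖ * ⟪O e, O (ω : EuclideanSpace ℝ (Fin n))⟫ := by rw [hO]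
          _ = ‖u‖ * ⟪e, (ω : EuclideanSpace ℝ (Fin n))⟫ := by rw [O.inner_map_map]
      rw [h1, nnnorm_mul, ENNReal.coe_mul, ENNReal.mul_rpow_of_nonneg _ _ ht.le, nnnorm_norm]
    calc ∫⁻ ω, (‖⟪u, (ω : EuclideanSpace ℝ (Fin n))⟫‖₊ : ℝ≥0∞) ^ t ∂(sphereProb n)
        = ∫⁻ ω, (‖⟪u, (ω : EuclideanSpace ℝ (Fin n))⟫‖₊ : ℝ≥0∞) ^ t
            ∂((sphereProb n).map (sphereMap O)) := by rw [sphereProb_map]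
      _ = ∫⁻ ω, (‖⟪u, ((sphereMap O ω) : EuclideanSpace ℝ (Fin n))⟫‖₊ : ℝ≥0∞) ^ t
            ∂(sphereProb n) :=
          lintegral_map ((measurable_inner_sphere u).pow_const t)
            (continuous_sphereMap O).measurable
      _ = ∫⁻ ω, (‖u‖₊ : ℝ≥0∞) ^ t * (‖⟪e, (ω : EuclideanSpace ℝ (Fin n))⟫‖₊ : ℝ≥0∞) ^ t
            ∂(sphereProb n) := by simp only [hcalc]
      _ = _ := lintegral_const_mul' _ _
            (ENNReal.rpow_ne_top_of_nonneg ht.le ENNReal.coe_ne_top)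

lemma cap_isOpen (e : EuclideanSpace ℝ (Fin n)) (a : ℝ) :
    IsOpen {ω : unitSphere n | a < ‖⟪e, (ω : EuclideanSpace ℝ (Fin n))⟫‖} :=
  isOpen_lt continuous_const ((continuous_const.inner continuous_subtype_val).norm)

lemma cap_pos (hn : 1 ≤ n) {e : EuclideanSpace ℝ (Fin n)} (he : ‖e‖ = 1) {a : ℝ}
    (ha0 : 0 ≤ a) (ha : a < 1) :
    0 < sphereProb n {ω : unitSphere n | a < ‖⟪e, (ω : EuclideanSpace ℝ (Fin n))⟫‖} := by
  set cap := {ω : unitSphere n | a < ‖⟪e, (ω : EuclideanSpace ℝ (Fin n))⟫‖} with hcap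
  have hcapm : MeasurableSet cap := (cap_isOpen e a).measurableSet
  set U := {x : EuclideanSpace ℝ (Fin n) | ‖x‖ < 1 ∧ a * ‖x‖ < ‖⟪e, x⟫‖} with hUdef
  have hU : IsOpen U :=
    (isOpen_lt continuous_norm continuous_const).inter
      (isOpen_lt (continuous_const.mul continuous_norm)
        ((continuous_const.inner continuous_id).norm))
  have hne : ((1:ℝ)/2) • e ∈ U := by
    constructor
    · show ‖((1:ℝ)/2) • e‖ < 1
      rw [norm_smul, he]; norm_num
    · show a * ‖((1:ℝ)/2) • e‖ < ‖⟪e, ((1:ℝ)/2) • e⟫‖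
      rw [norm_smul, he, real_inner_smul_right, real_inner_self_eq_norm_mul_norm, he]
      simp only [mul_one, one_mul, Real.norm_eq_abs]
      rw [abs_of_pos (by norm_num : (0:ℝ) < 1/2)]
      nlinarith
  have hsub : U ⊆ Ioo (0:ℝ) 1 • (Subtype.val '' cap) := by
    rintro x ⟨hx1, hx2⟩
    have hx0 : x ≠ 0 := by
      rintro rfl
      simp at hx2
    have hxpos : 0 < ‖x‖ := norm_pos_iff.mpr hx0
    have hsph : ‖x‖⁻¹ • x ∈ unitSphere n := by
      simp [mem_sphere_iff_norm, norm_smul, abs_of_pos (inv_pos.mpr hxpos),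
        inv_mul_cancel₀ hxpos.ne']
    have hcapmem : (⟨‖x‖⁻¹ • x, hsph⟩ : unitSphere n) ∈ cap := by
      show a < ‖⟪e, ‖x‖⁻¹ • x⟫‖
      rw [real_inner_smul_right, Real.norm_eq_abs, abs_mul,
        abs_of_pos (inv_pos.mpr hxpos)]
      have : a = ‖x‖⁻¹ * (a * ‖x‖) := by field_simp
      rw [this]
      exact mul_lt_mul_of_pos_left (by simpa [Real.norm_eq_abs] using hx2)
        (inv_pos.mpr hxpos)
    refine Set.mem_smul.mpr ⟨‖x‖, ⟨hxpos, hx1⟩, ‖x‖⁻¹ • x,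
      ⟨⟨‖x‖⁻¹ • x, hsph⟩, hcapmem, rfl⟩, smul_inv_smul₀ hxpos.ne' x⟩
  have hvol : (0:ℝ≥0∞) < volume (Ioo (0:ℝ) 1 • (Subtype.val '' cap) :
      Set (EuclideanSpace ℝ (Fin n))) :=
    lt_of_lt_of_le (hU.measure_pos volume ⟨_, hne⟩) (measure_mono hsub)
  have htos : 0 < (volume : Measure (EuclideanSpace ℝ (Fin n))).toSphere cap := by
    rw [Measure.toSphere_apply' _ hcapm]
    refine ENNReal.mul_pos ?_ hvol.ne'
    rw [finrank_euclideanSpace_fin]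
    exact_mod_cast (Nat.cast_pos.mpr (by omega : 0 < n)).ne'
  show 0 < (((volume : Measure (EuclideanSpace ℝ (Fin n))).toSphere Set.univ)⁻¹ •
    (volume : Measure (EuclideanSpace ℝ (Fin n))).toSphere) cap
  rw [Measure.smul_apply, smul_eq_mul]
  exact ENNReal.mul_pos (ENNReal.inv_ne_zero.mpr toSphere_univ_ne_top) htos.ne'

lemma essSup_inner (hn : 1 ≤ n) {e : EuclideanSpace ℝ (Fin n)} (he : ‖e‖ = 1) :
    essSup (fun ω : unitSphere n => (‖⟪e, (ω : EuclideanSpace ℝ (Fin n))⟫‖₊ : ℝ≥0∞))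
      (sphereProb n) = 1 := by
  have hprob := sphereProb_isProbability hn
  apply le_antisymm
  · refine essSup_le_of_ae_le _ (Filter.Eventually.of_forall fun ω => ?_)
    have h1 : ‖⟪e, (ω : EuclideanSpace ℝ (Fin n))⟫‖ ≤ 1 := by
      have h := abs_real_inner_le_norm e (ω : EuclideanSpace ℝ (Fin n))
      rw [he, norm_coe_sphere, one_mul] at h
      simpa [Real.norm_eq_abs] using h
    calc ((‖⟪e, (ω : EuclideanSpace ℝ (Fin n))⟫‖₊ : ℝ≥0∞))
        = ENNReal.ofReal ‖⟪e, (ω : EuclideanSpace ℝ (Fin n))⟫‖ :=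
          (ofReal_norm_eq_coe_nnnorm _).symm
      _ ≤ ENNReal.ofReal 1 := ENNReal.ofReal_le_ofReal h1
      _ = 1 := ENNReal.ofReal_one
  · by_contra hlt
    push_neg at hlt
    obtain ⟨b, hb1, hb2⟩ := exists_between hlt
    have hbne : b ≠ ∞ := (hb2.trans_le le_top).ne
    have hblt1 : b.toReal < 1 := by
      have := ENNReal.toReal_strict_mono ENNReal.one_ne_top hb2
      simpa using this
    have hcap := cap_pos hn he (a := b.toReal) ENNReal.toReal_nonneg hblt1
    have hnull : sphereProb n
        {ω : unitSphere n | b.toReal < ‖⟪e, (ω : EuclideanSpace ℝ (Fin n))⟫‖} = 0 := by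
      refine measure_mono_null ?_ ((ae_iff.mp (ENNReal.ae_le_essSup
        (μ := sphereProb n)
        (f := fun ω : unitSphere n =>
          (‖⟪e, (ω : EuclideanSpace ℝ (Fin n))⟫‖₊ : ℝ≥0∞)))))
      intro ω hω
      simp only [Set.mem_setOf_eq] at hω ⊢
      intro hle
      have hbf : b < (‖⟪e, (ω : EuclideanSpace ℝ (Fin n))⟫‖₊ : ℝ≥0∞) := by
        rw [← ENNReal.ofReal_toReal hbne, ← ofReal_norm_eq_coe_nnnorm]
        exact (ENNReal.ofReal_lt_ofReal_iff (lt_of_le_of_lt ENNReal.toReal_nonneg hω)).mpr hω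
      exact absurd (hbf.trans_le hle) (not_lt.mpr hb1.le)
    exact hcap.ne' hnull

lemma lintegral_inner_pos (hn : 1 ≤ n) {e : EuclideanSpace ℝ (Fin n)} (he : ‖e‖ = 1)
    {t : ℝ} (ht : 0 ≤ t) :
    0 < ∫⁻ ω, (‖⟪e, (ω : EuclideanSpace ℝ (Fin n))⟫‖₊ : ℝ≥0∞) ^ t ∂(sphereProb n) := by
  have hcap := cap_pos hn he (a := 1/2) (by norm_num) (by norm_num)
  set cap := {ω : unitSphere n | 1/2 < ‖⟪e, (ω : EuclideanSpace ℝ (Fin n))⟫‖} with hcapdef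
  have hcapm : MeasurableSet cap := (cap_isOpen e (1/2)).measurableSet
  have hmono : cap.indicator (fun _ => ENNReal.ofReal (1/2) ^ t)
      ≤ fun ω : unitSphere n => (‖⟪e, (ω : EuclideanSpace ℝ (Fin n))⟫‖₊ : ℝ≥0∞) ^ t := by
    intro ω
    by_cases hω : ω ∈ cap
    · rw [Set.indicator_of_mem hω]
      refine ENNReal.rpow_le_rpow ?_ ht
      rw [← ofReal_norm_eq_coe_nnnorm]
      exact ENNReal.ofReal_le_ofReal (le_of_lt hω)
    · rw [Set.indicator_of_notMem hω]; exact zero_le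
  calc (0:ℝ≥0∞) < ENNReal.ofReal (1/2) ^ t * sphereProb n cap :=
        ENNReal.mul_pos (ENNReal.rpow_pos (ENNReal.ofReal_pos.mpr (by norm_num))
          ENNReal.ofReal_ne_top).ne' hcap.ne'
    _ = ∫⁻ ω, cap.indicator (fun _ => ENNReal.ofReal (1/2) ^ t) ω ∂(sphereProb n) := by
        rw [lintegral_indicator hcapm, setLIntegral_const, mul_comm]
    _ ≤ _ := lintegral_mono hmono

-- chunk4: rpow/iInf helpers, exponent monotonicity, Minkowski's integral inequality

lemma iInf_rpow_of_pos {ι : Sort*} (f : ι → ℝ≥0∞) {t : ℝ} (ht : 0 < t) :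
    (⨅ i, f i) ^ t = ⨅ i, f i ^ t := by
  have h := (ENNReal.orderIsoRpow t ht).map_iInf f
  simp only [ENNReal.orderIsoRpow_apply] at h
  exact h

lemma iSup_rpow_of_pos {ι : Sort*} (f : ι → ℝ≥0∞) {t : ℝ} (ht : 0 < t) :
    (⨆ i, f i) ^ t = ⨆ i, f i ^ t := by
  have h := (ENNReal.orderIsoRpow t ht).map_iSup f
  simp only [ENNReal.orderIsoRpow_apply] at h
  exact h

lemma MK_eq {p : ℝ} (hp : 0 < p) {α : Type*} [PseudoEMetricSpace α] [MeasurableSpace α]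
    (μ ν : Measure α) :
    MK p μ ν = ⨅ γ ∈ couplings μ ν, (∫⁻ z, edist z.1 z.2 ^ p ∂γ) ^ (1 / p) := by
  unfold MK
  rw [iInf_rpow_of_pos _ (by positivity : (0:ℝ) < 1/p)]
  exact iInf_congr fun γ => iInf_rpow_of_pos _ (by positivity)

lemma lqnorm_mono_exp {Ω : Type*} [MeasurableSpace Ω] (σ : Measure Ω) [IsProbabilityMeasure σ]
    {f : Ω → ℝ≥0∞} (hf : Measurable f) {a b : ℝ} (ha : 0 < a) (hab : a ≤ b) :
    (∫⁻ ω, f ω ^ a ∂σ) ^ (1/a) ≤ (∫⁻ ω, f ω ^ b ∂σ) ^ (1/b) := by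
  rcases eq_or_lt_of_le hab with h | h
  · rw [h]
  · have hb : 0 < b := ha.trans h
    have hP : 1 < b / a := (one_lt_div ha).mpr h
    have hconj := Real.HolderConjugate.conjExponent hP
    have hH := ENNReal.lintegral_mul_le_Lp_mul_Lq σ hconj (hf.pow_const a).aemeasurable
      (aemeasurable_const (b := (1:ℝ≥0∞)))
    simp only [Pi.mul_apply, mul_one, ENNReal.one_rpow, lintegral_const, measure_univ] at hH
    have hpow : ∀ ω, (f ω ^ a) ^ (b/a) = f ω ^ b := by
      intro ω
      rw [← ENNReal.rpow_mul]
      congr 1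
      field_simp
    have hH2 : ∫⁻ ω, f ω ^ a ∂σ ≤ (∫⁻ ω, f ω ^ b ∂σ) ^ (a/b) := by
      refine le_trans hH (le_of_eq ?_)
      rw [lintegral_congr hpow, one_div_div]
    calc (∫⁻ ω, f ω ^ a ∂σ) ^ (1/a) ≤ ((∫⁻ ω, f ω ^ b ∂σ) ^ (a/b)) ^ (1/a) :=
          ENNReal.rpow_le_rpow hH2 (by positivity)
      _ = (∫⁻ ω, f ω ^ b ∂σ) ^ (1/b) := by
          rw [← ENNReal.rpow_mul]
          congr 1
          field_simp

lemma minkowski_lintegral {Ω Z : Type*} [MeasurableSpace Ω] [MeasurableSpace Z]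
    (σ : Measure Ω) (γ : Measure Z) [IsProbabilityMeasure σ] [IsProbabilityMeasure γ]
    {g : Ω × Z → ℝ≥0∞} (hg : Measurable g) {s : ℝ} (hs : 1 ≤ s) :
    (∫⁻ ω, (∫⁻ z, g (ω, z) ∂γ) ^ s ∂σ) ^ (1/s) ≤
      ∫⁻ z, (∫⁻ ω, g (ω, z) ^ s ∂σ) ^ (1/s) ∂γ := by
  rcases eq_or_lt_of_le hs with h1 | hlt
  · simp only [← h1, one_div_one, ENNReal.rpow_one]
    exact le_of_eq (lintegral_lintegral_swap (f := fun ω z => g (ω, z)) hg.aemeasurable)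
  · have hs0 : 0 < s := lt_trans one_pos hlt
    set K := ∫⁻ z, (∫⁻ ω, g (ω, z) ^ s ∂σ) ^ (1/s) ∂γ with hK
    have hFmeas : Measurable fun ω => ∫⁻ z, g (ω, z) ∂γ := hg.lintegral_prod_right'
    set F := fun ω => ∫⁻ z, g (ω, z) ∂γ with hF
    have hconj : s.HolderConjugate (Real.conjExponent s) := Real.HolderConjugate.conjExponent hlt
    set t := Real.conjExponent s with htdef
    have hconj' := hconj.symm
    have hst : (s - 1) * t = s := hconj.sub_one_mul_conj
    have ht0 : 0 < t := hconj'.pos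
    have key : ∀ c : ℕ, (∫⁻ ω, (F ω ⊓ (c:ℝ≥0∞)) ^ s ∂σ) ^ (1/s) ≤ K := by
      intro c
      set A := ∫⁻ ω, (F ω ⊓ (c:ℝ≥0∞)) ^ s ∂σ with hA
      have hFc_meas : Measurable fun ω => F ω ⊓ (c:ℝ≥0∞) := hFmeas.min measurable_const
      have hFc_ne_top : ∀ ω, (F ω ⊓ (c:ℝ≥0∞)) ≠ ∞ :=
        fun ω => ne_top_of_le_ne_top (ENNReal.natCast_ne_top c) inf_le_right
      have hA_le : A ≤ ((c:ℝ≥0∞)) ^ s := by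
        calc A ≤ ∫⁻ _, ((c:ℝ≥0∞)) ^ s ∂σ :=
              lintegral_mono fun ω => ENNReal.rpow_le_rpow inf_le_right hs0.le
          _ = ((c:ℝ≥0∞)) ^ s := by simp [lintegral_const]
      have hA_ne_top : A ≠ ∞ :=
        ne_top_of_le_ne_top (ENNReal.rpow_ne_top_of_nonneg hs0.le (ENNReal.natCast_ne_top c)) hA_le
      by_cases hA0 : A = 0
      · rw [hA0, ENNReal.zero_rpow_of_pos (by positivity)]
        exact zero_le
      · have hxpow : ∀ x : ℝ≥0∞, x ^ s = x ^ (s-1) * x := by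
          intro x
          calc x ^ s = x ^ ((s-1) + 1) := by rw [sub_add_cancel]
            _ = x ^ (s-1) * x ^ (1:ℝ) :=
                ENNReal.rpow_add_of_nonneg (s-1) 1 (by linarith) zero_le_one
            _ = x ^ (s-1) * x := by rw [ENNReal.rpow_one]
        have step : A ≤ A ^ (1/t) * K := by
          calc A = ∫⁻ ω, (F ω ⊓ (c:ℝ≥0∞)) ^ (s-1) * (F ω ⊓ (c:ℝ≥0∞)) ∂σ :=
                lintegral_congr fun ω => hxpow _
            _ ≤ ∫⁻ ω, (F ω ⊓ (c:ℝ≥0∞)) ^ (s-1) * F ω ∂σ :=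
                lintegral_mono fun ω => mul_le_mul_right inf_le_left _
            _ = ∫⁻ ω, ∫⁻ z, (F ω ⊓ (c:ℝ≥0∞)) ^ (s-1) * g (ω, z) ∂γ ∂σ := by
                refine lintegral_congr fun ω => ?_
                rw [lintegral_const_mul' _ _
                  (ENNReal.rpow_ne_top_of_nonneg (by linarith) (hFc_ne_top ω))]
            _ = ∫⁻ z, ∫⁻ ω, (F ω ⊓ (c:ℝ≥0∞)) ^ (s-1) * g (ω, z) ∂σ ∂γ :=
                lintegral_lintegral_swap
                  (f := fun ω z => (F ω ⊓ (c:ℝ≥0∞)) ^ (s-1) * g (ω, z))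
                  ((((hFc_meas.pow_const (s-1)).comp measurable_fst).mul hg).aemeasurable)
            _ ≤ ∫⁻ z, (∫⁻ ω, ((F ω ⊓ (c:ℝ≥0∞)) ^ (s-1)) ^ t ∂σ) ^ (1/t) *
                  (∫⁻ ω, g (ω, z) ^ s ∂σ) ^ (1/s) ∂γ := by
                refine lintegral_mono fun z => ?_
                exact ENNReal.lintegral_mul_le_Lp_mul_Lq σ hconj'
                  (hFc_meas.pow_const (s-1)).aemeasurable
                  (hg.comp (measurable_id.prodMk measurable_const)).aemeasurable
            _ = ∫⁻ z, A ^ (1/t) * (∫⁻ ω, g (ω, z) ^ s ∂σ) ^ (1/s) ∂γ := by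
                refine lintegral_congr fun z => ?_
                congr 2
                refine lintegral_congr fun ω => ?_
                rw [← ENNReal.rpow_mul, hst]
            _ = A ^ (1/t) * K :=
                lintegral_const_mul' _ _
                  (ENNReal.rpow_ne_top_of_nonneg (by positivity) hA_ne_top)
        have hsplit : A = A ^ (1/t) * A ^ (1/s) := by
          rw [← ENNReal.rpow_add _ _ hA0 hA_ne_top]
          rw [show 1/t + 1/s = 1 by
            rw [one_div, one_div]
            exact hconj'.inv_add_inv_eq_one]
          rw [ENNReal.rpow_one]
        nth_rewrite 1 [hsplit] at step
        exact (ENNReal.mul_le_mul_iff_right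
          ((ENNReal.rpow_pos (pos_iff_ne_zero.mpr hA0) hA_ne_top).ne')
          (ENNReal.rpow_ne_top_of_nonneg (by positivity) hA_ne_top)).mp step
    have hmono : Monotone fun (c:ℕ) => fun (ω : Ω) => (F ω ⊓ (c:ℝ≥0∞)) ^ s := by
      intro i j hij
      intro ω
      exact ENNReal.rpow_le_rpow (inf_le_inf_left _ (by exact_mod_cast Nat.cast_le.mpr hij))
        hs0.le
    have hsup : ∀ ω, ⨆ c : ℕ, (F ω ⊓ (c:ℝ≥0∞)) ^ s = F ω ^ s := by
      intro ω
      apply le_antisymm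
      · exact iSup_le fun c => ENNReal.rpow_le_rpow inf_le_left hs0.le
      · by_cases hFω : F ω = ∞
        · rw [hFω, ENNReal.top_rpow_of_pos hs0]
          have hterm : ∀ c : ℕ, ((c:ℝ≥0∞)) ≤ ((⊤:ℝ≥0∞) ⊓ (c:ℝ≥0∞)) ^ s := by
            intro c
            rw [top_inf_eq]
            rcases Nat.eq_zero_or_pos c with hc | hc
            · simp [hc]
            · calc ((c:ℝ≥0∞)) = ((c:ℝ≥0∞)) ^ (1:ℝ) := (ENNReal.rpow_one _).symm
                _ ≤ ((c:ℝ≥0∞)) ^ s := ENNReal.rpow_le_rpow_of_exponent_le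
                    (by exact_mod_cast hc) hs
          calc (⊤:ℝ≥0∞) = ⨆ c : ℕ, ((c:ℝ≥0∞)) := ENNReal.iSup_natCast.symm
            _ ≤ ⨆ c : ℕ, ((⊤:ℝ≥0∞) ⊓ (c:ℝ≥0∞)) ^ s := iSup_mono hterm
        · obtain ⟨c, hc⟩ := ENNReal.exists_nat_gt hFω
          refine le_trans (le_of_eq ?_) (le_iSup _ c)
          rw [inf_eq_left.mpr hc.le]
    have hlim : ∫⁻ ω, F ω ^ s ∂σ = ⨆ c : ℕ, ∫⁻ ω, (F ω ⊓ (c:ℝ≥0∞)) ^ s ∂σ := by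
      rw [← lintegral_iSup (fun c => (hFmeas.min measurable_const).pow_const s)
        (fun i j hij ω => hmono hij ω)]
      exact lintegral_congr fun ω => (hsup ω).symm
    rw [hlim, iSup_rpow_of_pos _ (by positivity : (0:ℝ) < 1/s)]
    exact iSup_le key

-- chunk5: radon slicing lemmas and the main estimates

lemma measurable_proj (ω : unitSphere n) :
    Measurable fun x : EuclideanSpace ℝ (Fin n) => ⟪x, (ω : EuclideanSpace ℝ (Fin n))⟫ :=
  (continuous_id.inner continuous_const).measurable

lemma radon_prob {μ : Measure (EuclideanSpace ℝ (Fin n))} [IsProbabilityMeasure μ]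
    (ω : unitSphere n) : IsProbabilityMeasure (radon μ ω) :=
  Measure.isProbabilityMeasure_map (measurable_proj ω).aemeasurable

lemma MK_radon_le {p : ℝ} (hp : 0 < p) {μ ν : Measure (EuclideanSpace ℝ (Fin n))}
    {γ : Measure (EuclideanSpace ℝ (Fin n) × EuclideanSpace ℝ (Fin n))}
    (hγ : γ ∈ couplings μ ν) (ω : unitSphere n) :
    MK p (radon μ ω) (radon ν ω) ≤
      (∫⁻ z, (‖⟪z.1 - z.2, (ω : EuclideanSpace ℝ (Fin n))⟫‖₊ : ℝ≥0∞) ^ p ∂γ) ^ (1/p) := by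
  have hm := measurable_proj ω
  have hc := map_mem_couplings hγ hm hm
  refine le_trans (MK_le_coupling hp hc) (ENNReal.rpow_le_rpow (le_of_eq ?_) (by positivity))
  rw [lintegral_map ((measurable_edist).pow_const p) (hm.prodMap hm)]
  refine lintegral_congr fun z => ?_
  rw [edist_eq_coe_nnnorm_sub]
  dsimp only [Prod.map]
  rw [← inner_sub_left]

lemma inner_rpow_le_edist {p : ℝ} (hp : 0 ≤ p) (ω : unitSphere n)
    (z : EuclideanSpace ℝ (Fin n) × EuclideanSpace ℝ (Fin n)) :
    (‖⟪z.1 - z.2, (ω : EuclideanSpace ℝ (Fin n))⟫‖₊ : ℝ≥0∞) ^ p ≤ edist z.1 z.2 ^ p := by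
  refine ENNReal.rpow_le_rpow ?_ hp
  rw [edist_eq_coe_nnnorm_sub, ← ofReal_norm_eq_coe_nnnorm, ← ofReal_norm_eq_coe_nnnorm]
  apply ENNReal.ofReal_le_ofReal
  have h := abs_real_inner_le_norm (z.1 - z.2) (ω : EuclideanSpace ℝ (Fin n))
  rw [norm_coe_sphere, mul_one] at h
  simpa [Real.norm_eq_abs] using h

lemma MK_radon_le_MK {p : ℝ} (hp : 0 < p) (μ ν : Measure (EuclideanSpace ℝ (Fin n)))
    (ω : unitSphere n) : MK p (radon μ ω) (radon ν ω) ≤ MK p μ ν := by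
  rw [MK_eq hp μ ν]
  refine le_iInf₂ fun γ hγ => ?_
  exact le_trans (MK_radon_le hp hγ ω) (ENNReal.rpow_le_rpow
    (lintegral_mono fun z => inner_rpow_le_edist hp.le ω z) (by positivity))

lemma measurable_g (p : ℝ) {γ : Measure (EuclideanSpace ℝ (Fin n) × EuclideanSpace ℝ (Fin n))} :
    Measurable fun w : (unitSphere n) × (EuclideanSpace ℝ (Fin n) × EuclideanSpace ℝ (Fin n)) =>
      (‖⟪w.2.1 - w.2.2, (w.1 : EuclideanSpace ℝ (Fin n))⟫‖₊ : ℝ≥0∞) ^ p := by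
  have h1 : Measurable fun w : (unitSphere n) ×
      (EuclideanSpace ℝ (Fin n) × EuclideanSpace ℝ (Fin n)) =>
      ((w.2.1 - w.2.2 : EuclideanSpace ℝ (Fin n)), (w.1 : EuclideanSpace ℝ (Fin n))) :=
    ((measurable_fst.comp measurable_snd).sub (measurable_snd.comp measurable_snd)).prodMk
      (measurable_subtype_coe.comp measurable_fst)
  exact ((continuous_inner.measurable).comp h1).nnnorm.coe_nnreal_ennreal.pow_const p

lemma main_ineq_top {p : ℝ} (hp : 1 ≤ p) (hn : 1 ≤ n) {e : EuclideanSpace ℝ (Fin n)}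
    (he : ‖e‖ = 1) (μ ν : Measure (EuclideanSpace ℝ (Fin n))) [IsProbabilityMeasure μ]
    [IsProbabilityMeasure ν] :
    essSup (fun ω => MK p (radon μ ω) (radon ν ω)) (sphereProb n) ≤
      essSup (fun ω : unitSphere n =>
        (‖⟪e, (ω : EuclideanSpace ℝ (Fin n))⟫‖₊ : ℝ≥0∞)) (sphereProb n) * MK p μ ν := by
  haveI := sphereProb_isProbability hn
  rw [essSup_inner hn he, one_mul]
  exact essSup_le_of_ae_le _ (Filter.Eventually.of_forall fun ω =>
    MK_radon_le_MK (lt_of_lt_of_le one_pos hp) μ ν ω)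

lemma main_ineq_fin {p : ℝ} (hp : 1 ≤ p) {q : ℝ≥0∞} (hq1 : 1 ≤ q) (hq : q ≠ ∞) (hn : 1 ≤ n)
    {e : EuclideanSpace ℝ (Fin n)} (he : ‖e‖ = 1)
    (μ ν : Measure (EuclideanSpace ℝ (Fin n))) [IsProbabilityMeasure μ]
    [IsProbabilityMeasure ν] :
    (∫⁻ ω, MK p (radon μ ω) (radon ν ω) ^ q.toReal ∂(sphereProb n)) ^ (1/q.toReal) ≤
      (∫⁻ ω, (‖⟪e, (ω : EuclideanSpace ℝ (Fin n))⟫‖₊ : ℝ≥0∞) ^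
          (max (ENNReal.ofReal p) q).toReal ∂(sphereProb n)) ^
        (1/(max (ENNReal.ofReal p) q).toReal) * MK p μ ν := by
  haveI hσ : IsProbabilityMeasure (sphereProb n) := sphereProb_isProbability hn
  have hp0 : 0 < p := lt_of_lt_of_le one_pos hp
  have hrtop : max (ENNReal.ofReal p) q ≠ ∞ := by
    simp [hq]
  set rt := (max (ENNReal.ofReal p) q).toReal with hrt
  have hprt : p ≤ rt := by
    have h := ENNReal.toReal_mono hrtop (le_max_left (ENNReal.ofReal p) q)
    rwa [ENNReal.toReal_ofReal hp0.le] at h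
  have hqrt : q.toReal ≤ rt := ENNReal.toReal_mono hrtop (le_max_right _ _)
  have hqt1 : (1:ℝ) ≤ q.toReal := by
    have h := ENNReal.toReal_mono hq hq1
    simpa using h
  have hrt1 : (1:ℝ) ≤ rt := le_trans hp hprt
  have hrt0 : (0:ℝ) < rt := lt_of_lt_of_le one_pos hrt1
  set Mrt := ∫⁻ ω, (‖⟪e, (ω : EuclideanSpace ℝ (Fin n))⟫‖₊ : ℝ≥0∞) ^ rt ∂(sphereProb n)
    with hM
  have hMle1 : Mrt ≤ 1 := by
    have hbd : ∀ ω : unitSphere n,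
        (‖⟪e, (ω : EuclideanSpace ℝ (Fin n))⟫‖₊ : ℝ≥0∞) ^ rt ≤ 1 := by
      intro ω
      refine ENNReal.rpow_le_one ?_ hrt0.le
      rw [← ofReal_norm_eq_coe_nnnorm]
      have h := abs_real_inner_le_norm e (ω : EuclideanSpace ℝ (Fin n))
      rw [he, norm_coe_sphere, one_mul] at h
      calc ENNReal.ofReal ‖⟪e, (ω : EuclideanSpace ℝ (Fin n))⟫‖
          ≤ ENNReal.ofReal 1 := ENNReal.ofReal_le_ofReal (by simpa [Real.norm_eq_abs] using h)
        _ = 1 := ENNReal.ofReal_one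
    calc Mrt ≤ ∫⁻ _, 1 ∂(sphereProb n) := lintegral_mono hbd
      _ = 1 := by simp
  have hMtop : Mrt ≠ ∞ := ne_top_of_le_ne_top ENNReal.one_ne_top hMle1
  have hMpos : 0 < Mrt := lintegral_inner_pos hn he hrt0.le
  set C := Mrt ^ (1/rt) with hC
  have hC0 : C ≠ 0 := (ENNReal.rpow_pos hMpos hMtop).ne'
  have hCtop : C ≠ ∞ := ENNReal.rpow_ne_top_of_nonneg (by positivity) hMtop
  have key : ∀ γ ∈ couplings μ ν,
      (∫⁻ ω, MK p (radon μ ω) (radon ν ω) ^ q.toReal ∂(sphereProb n)) ^ (1/q.toReal)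
        ≤ C * (∫⁻ z, edist z.1 z.2 ^ p ∂γ) ^ (1/p) := by
    intro γ hγ
    haveI := coupling_prob hγ
    set g : (unitSphere n) × (EuclideanSpace ℝ (Fin n) × EuclideanSpace ℝ (Fin n)) → ℝ≥0∞ :=
      fun w => (‖⟪w.2.1 - w.2.2, (w.1 : EuclideanSpace ℝ (Fin n))⟫‖₊ : ℝ≥0∞) ^ p with hg
    have hgm : Measurable g := measurable_g p (γ := γ)
    set G : unitSphere n → ℝ≥0∞ := fun ω => (∫⁻ z, g (ω, z) ∂γ) ^ (1/p) with hG
    have hGm : Measurable G := (hgm.lintegral_prod_right').pow_const _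
    have step1 : (∫⁻ ω, MK p (radon μ ω) (radon ν ω) ^ q.toReal ∂(sphereProb n)) ^ (1/q.toReal)
        ≤ (∫⁻ ω, G ω ^ q.toReal ∂(sphereProb n)) ^ (1/q.toReal) := by
      refine ENNReal.rpow_le_rpow (lintegral_mono fun ω => ?_) (by positivity)
      exact ENNReal.rpow_le_rpow (MK_radon_le hp0 hγ ω) (by positivity)
    have step2 : (∫⁻ ω, G ω ^ q.toReal ∂(sphereProb n)) ^ (1/q.toReal)
        ≤ (∫⁻ ω, G ω ^ rt ∂(sphereProb n)) ^ (1/rt) :=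
      lqnorm_mono_exp _ hGm (by linarith) hqrt
    set s := rt / p with hs
    have hs1 : (1:ℝ) ≤ s := (one_le_div hp0).mpr hprt
    have hs0 : (0:ℝ) < s := lt_of_lt_of_le one_pos hs1
    have hps : p * s = rt := by
      rw [hs]; field_simp
    have step3 : (∫⁻ ω, G ω ^ rt ∂(sphereProb n)) ^ (1/rt)
        ≤ C * (∫⁻ z, edist z.1 z.2 ^ p ∂γ) ^ (1/p) := by
      have hGrt : ∀ ω, G ω ^ rt = (∫⁻ z, g (ω, z) ∂γ) ^ s := by
        intro ω
        rw [hG]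
        dsimp only
        rw [← ENNReal.rpow_mul, show (1/p) * rt = s from by rw [hs, one_div, inv_mul_eq_div]]
      have hmink := minkowski_lintegral (sphereProb n) γ hgm hs1
      have hinner : ∀ z : EuclideanSpace ℝ (Fin n) × EuclideanSpace ℝ (Fin n),
          (∫⁻ ω, g (ω, z) ^ s ∂(sphereProb n)) ^ (1/s)
            = (‖z.1 - z.2‖₊ : ℝ≥0∞) ^ p * Mrt ^ (1/s) := by
        intro z
        have h1 : ∀ ω : unitSphere n, g (ω, z) ^ s
            = (‖⟪z.1 - z.2, (ω : EuclideanSpace ℝ (Fin n))⟫‖₊ : ℝ≥0∞) ^ rt := by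
          intro ω
          rw [hg]
          dsimp only
          rw [← ENNReal.rpow_mul, hps]
        rw [lintegral_congr h1, lintegral_inner_rpow (z.1 - z.2) he hrt0,
          ENNReal.mul_rpow_of_nonneg _ _ (by positivity : (0:ℝ) ≤ 1/s), ← ENNReal.rpow_mul,
          show rt * (1/s) = p from by rw [hs]; field_simp; try ring]
      calc (∫⁻ ω, G ω ^ rt ∂(sphereProb n)) ^ (1/rt)
          = ((∫⁻ ω, (∫⁻ z, g (ω, z) ∂γ) ^ s ∂(sphereProb n)) ^ (1/s)) ^ (1/p) := by
            rw [lintegral_congr hGrt, ← ENNReal.rpow_mul,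
              show (1/rt) = (1/s) * (1/p) from by rw [hs]; field_simp; try ring]
        _ ≤ (∫⁻ z, (∫⁻ ω, g (ω, z) ^ s ∂(sphereProb n)) ^ (1/s) ∂γ) ^ (1/p) :=
            ENNReal.rpow_le_rpow hmink (by positivity)
        _ = ((∫⁻ z, (‖z.1 - z.2‖₊ : ℝ≥0∞) ^ p ∂γ) * Mrt ^ (1/s)) ^ (1/p) := by
            rw [lintegral_congr hinner,
              lintegral_mul_const' _ _ (ENNReal.rpow_ne_top_of_nonneg (by positivity) hMtop)]
        _ = C * (∫⁻ z, edist z.1 z.2 ^ p ∂γ) ^ (1/p) := by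
            rw [ENNReal.mul_rpow_of_nonneg _ _ (by positivity : (0:ℝ) ≤ 1/p), mul_comm, hC,
              ← ENNReal.rpow_mul, show (1/s) * (1/p) = 1/rt from by rw [hs]; field_simp; try ring]
            congr 1
            refine congrArg (fun x => x ^ (1/p)) (lintegral_congr fun z => ?_)
            rw [edist_eq_coe_nnnorm_sub]
    exact le_trans (le_trans step1 step2) step3
  rw [MK_eq hp0 μ ν]
  have hswap : C * ⨅ γ ∈ couplings μ ν, (∫⁻ z, edist z.1 z.2 ^ p ∂γ) ^ (1/p)
      = ⨅ γ ∈ couplings μ ν, C * (∫⁻ z, edist z.1 z.2 ^ p ∂γ) ^ (1/p) := by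
    rw [ENNReal.mul_iInf_of_ne hC0 hCtop]
    exact iInf_congr fun γ => ENNReal.mul_iInf_of_ne hC0 hCtop
  rw [hswap]
  exact le_iInf₂ key

lemma dirac_eq {p : ℝ} (hp : 1 ≤ p) (hn : 1 ≤ n) {e : EuclideanSpace ℝ (Fin n)} (he : ‖e‖ = 1)
    (μ : Measure (EuclideanSpace ℝ (Fin n))) [IsProbabilityMeasure μ]
    (x₀ : EuclideanSpace ℝ (Fin n)) :
    (∫⁻ ω, MK p (radon (Measure.dirac x₀) ω) (radon μ ω) ^ p ∂(sphereProb n)) ^ (1/p) =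
      (∫⁻ ω, (‖⟪e, (ω : EuclideanSpace ℝ (Fin n))⟫‖₊ : ℝ≥0∞) ^ p ∂(sphereProb n)) ^ (1/p) *
        MK p (Measure.dirac x₀) μ := by
  haveI := sphereProb_isProbability hn
  have hp0 : 0 < p := lt_of_lt_of_le one_pos hp
  set Mp := ∫⁻ ω, (‖⟪e, (ω : EuclideanSpace ℝ (Fin n))⟫‖₊ : ℝ≥0∞) ^ p ∂(sphereProb n) with hMp
  have hMle1 : Mp ≤ 1 := by
    have hbd : ∀ ω : unitSphere n,
        (‖⟪e, (ω : EuclideanSpace ℝ (Fin n))⟫‖₊ : ℝ≥0∞) ^ p ≤ 1 := by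
      intro ω
      refine ENNReal.rpow_le_one ?_ hp0.le
      rw [← ofReal_norm_eq_coe_nnnorm]
      have h := abs_real_inner_le_norm e (ω : EuclideanSpace ℝ (Fin n))
      rw [he, norm_coe_sphere, one_mul] at h
      calc ENNReal.ofReal ‖⟪e, (ω : EuclideanSpace ℝ (Fin n))⟫‖
          ≤ ENNReal.ofReal 1 := ENNReal.ofReal_le_ofReal (by simpa [Real.norm_eq_abs] using h)
        _ = 1 := ENNReal.ofReal_one
    calc Mp ≤ ∫⁻ _, 1 ∂(sphereProb n) := lintegral_mono hbd
      _ = 1 := by simp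
  have hMtop : Mp ≠ ∞ := ne_top_of_le_ne_top ENNReal.one_ne_top hMle1
  have hpt : ∀ ω : unitSphere n, MK p (radon (Measure.dirac x₀) ω) (radon μ ω) ^ p
      = ∫⁻ y, (‖⟪x₀ - y, (ω : EuclideanSpace ℝ (Fin n))⟫‖₊ : ℝ≥0∞) ^ p ∂μ := by
    intro ω
    haveI := radon_prob (μ := μ) ω
    rw [show radon (Measure.dirac x₀) ω
        = Measure.dirac ⟪x₀, (ω : EuclideanSpace ℝ (Fin n))⟫ from
      Measure.map_dirac' (measurable_proj ω) x₀]
    rw [MK_dirac p _ _, ← ENNReal.rpow_mul, one_div_mul_cancel hp0.ne', ENNReal.rpow_one]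
    show ∫⁻ t, edist ⟪x₀, (ω : EuclideanSpace ℝ (Fin n))⟫ t ^ p ∂(radon μ ω) = _
    have hm2 : Measurable fun t : ℝ => edist ⟪x₀, (ω : EuclideanSpace ℝ (Fin n))⟫ t ^ p :=
      (measurable_edist.comp measurable_prodMk_left).pow_const p
    rw [show radon μ ω = μ.map (fun x => ⟪x, (ω : EuclideanSpace ℝ (Fin n))⟫) from rfl,
      lintegral_map hm2 (measurable_proj ω)]
    refine lintegral_congr fun y => ?_
    rw [edist_eq_coe_nnnorm_sub, ← inner_sub_left]
  rw [lintegral_congr hpt,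
    lintegral_lintegral_swap (f := fun (ω : unitSphere n) (y : EuclideanSpace ℝ (Fin n)) =>
      (‖⟪x₀ - y, (ω : EuclideanSpace ℝ (Fin n))⟫‖₊ : ℝ≥0∞) ^ p)
      ((((continuous_inner.measurable).comp
        ((measurable_const.sub measurable_snd).prodMk
          (measurable_subtype_coe.comp measurable_fst))).nnnorm.coe_nnreal_ennreal.pow_const p).aemeasurable)]
  have hin : ∀ y : EuclideanSpace ℝ (Fin n),
      ∫⁻ ω, (‖⟪x₀ - y, (ω : EuclideanSpace ℝ (Fin n))⟫‖₊ : ℝ≥0∞) ^ p ∂(sphereProb n)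
        = (‖x₀ - y‖₊ : ℝ≥0∞) ^ p * Mp := fun y => lintegral_inner_rpow (x₀ - y) he hp0
  rw [lintegral_congr hin, lintegral_mul_const' Mp _ hMtop, MK_dirac p x₀ μ,
    ENNReal.mul_rpow_of_nonneg _ _ (by positivity : (0:ℝ) ≤ 1/p), mul_comm]
  congr 1
  refine congrArg (fun x => x ^ (1/p)) (lintegral_congr fun y => ?_)
  rw [edist_eq_coe_nnnorm_sub]

end SMK

/-- comparison `MK_{p,q} ≤ M_{max{p,q},n} · MK_p^{ℝ^n}`, with equality
`MK_{p,p}(δ_{x₀}, μ) = M_{p,n} · MK_p^{ℝ^n}(δ_{x₀}, μ)`, where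
`M_{q,n} = ‖ω ↦ ⟨e₁, ω⟩‖_{L^q(σ_{n-1})}`. -/
theorem sliced_MK_comparison (p : ℝ) (hp : 1 ≤ p) (q : ℝ≥0∞) (hq : 1 ≤ q) (n : ℕ) (hn : 1 ≤ n)
    (μ ν : Measure (EuclideanSpace ℝ (Fin n))) (hμ : MemPp p μ) (hν : MemPp p ν) :
    MKpq p q μ ν ≤
      lqNorm (max (ENNReal.ofReal p) q) (sphereProb n)
        (fun ω => (‖⟪EuclideanSpace.single (⟨0, hn⟩ : Fin n) (1:ℝ),
          (ω : EuclideanSpace ℝ (Fin n))⟫‖₊ : ℝ≥0∞)) * MK p μ ν ∧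
    ∀ x₀ : EuclideanSpace ℝ (Fin n),
      MKpq p (ENNReal.ofReal p) (Measure.dirac x₀) μ =
        lqNorm (ENNReal.ofReal p) (sphereProb n)
          (fun ω => (‖⟪EuclideanSpace.single (⟨0, hn⟩ : Fin n) (1:ℝ),
            (ω : EuclideanSpace ℝ (Fin n))⟫‖₊ : ℝ≥0∞)) * MK p (Measure.dirac x₀) μ := by
  obtain ⟨hμ1, -⟩ := hμ
  obtain ⟨hν1, -⟩ := hν
  haveI := hμ1
  haveI := hν1
  have hp0 : 0 < p := lt_of_lt_of_le one_pos hp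
  have he : ‖(EuclideanSpace.single (⟨0, hn⟩ : Fin n) (1:ℝ) : EuclideanSpace ℝ (Fin n))‖ = 1 := by
    rw [EuclideanSpace.norm_single, norm_one]
  constructor
  · by_cases hqt : q = ∞
    · subst hqt
      have hmax : max (ENNReal.ofReal p) (∞:ℝ≥0∞) = ∞ := max_eq_right le_top
      unfold MKpq lqNorm
      rw [hmax, if_pos rfl]
      exact SMK.main_ineq_top hp hn he μ ν
    · have hmax : max (ENNReal.ofReal p) q ≠ ∞ := by simp [hqt]
      unfold MKpq lqNorm
      rw [if_neg hqt, if_neg hmax]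
      exact SMK.main_ineq_fin hp hq hqt hn he μ ν
  · intro x₀
    unfold MKpq lqNorm
    rw [if_neg ENNReal.ofReal_ne_top, ENNReal.toReal_ofReal hp0.le]
    exact SMK.dirac_eq hp hn he μ x₀

end
end
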